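/- Let γ > 2 and define F : (0,1) → ℝ by F(t) = η_γ(t) − (γ/(γ−1))·t − (γ/(2(γ−1)))·t². Then for each k ∈ {0,1,2}, the limit lim_{t→0⁺} t^{k−2} · F^{(k)}(t) = 0 holds, where F^{(k)} denotes the k-th derivative of F. -/

import Mathlib

/-!
On `(0, 1)`, `F t = (1/(1-γ)) log g t - (γ/(γ-1)) t - (γ/(2(γ-1))) t²` with
`g t = t^γ + (1-t)^γ`. The formulas for `F'` and `F''` involve `t^γ`, `t^(γ-1)` and `t^(γ-2)`,
which tend to `0` as `t ↓ 0` because `γ > 2`, so `g → 1`, `g' → -γ`, `g'' → γ(γ-1)`; the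
subtracted linear and quadratic terms are exactly those making `F`, `F'` and `F''` tend to `0`.
L'Hôpital's rule then upgrades `F'' → 0` to `F'(t)/t → 0`, and that to `F(t)/t² → 0`.
-/

open Real Filter Set Topology

/-- The Rényi entropy function `η_γ : ℝ → ℝ`. It vanishes outside the open unit
interval; for `t ∈ (0,1)` it equals `(1/(1-γ))·ln(t^γ + (1-t)^γ)` when `γ ≠ 1`
and `-t·ln t - (1-t)·ln(1-t)` when `γ = 1`. Powers are real powers. -/
noncomputable def renyiEntropy (γ : ℝ) (t : ℝ) : ℝ :=
  if t ∈ Set.Ioo (0 : ℝ) 1 then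
    if γ = 1 then -t * Real.log t - (1 - t) * Real.log (1 - t)
    else (1 / (1 - γ)) * Real.log (t ^ γ + (1 - t) ^ γ)
  else 0

theorem tendsto_div_pow_succ_of_hasDerivAt {f f' : ℝ → ℝ} (n : ℕ)
    (hf : ∀ᶠ t in 𝓝[>] 0, HasDerivAt f (f' t) t) (hf0 : Tendsto f (𝓝[>] 0) (𝓝 0))
    (hf' : Tendsto (fun t => f' t / t ^ n) (𝓝[>] 0) (𝓝 0)) :
    Tendsto (fun t => f t / t ^ (n + 1)) (𝓝[>] 0) (𝓝 0) := by
  refine HasDerivAt.lhopital_zero_nhdsGT (g' := fun t => (n + 1 : ℕ) * t ^ n) hf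
    (.of_forall fun t => hasDerivAt_pow (n + 1) t) ?_ hf0 ?_ ?_
  · filter_upwards [self_mem_nhdsWithin] with t (ht : 0 < t)
    positivity
  · have h := ((continuous_pow (n + 1)).tendsto' (0 : ℝ) 0 (by simp))
    exact h.mono_left nhdsWithin_le_nhds
  · have h := hf'.div_const ((n + 1 : ℕ) : ℝ)
    rw [zero_div] at h
    refine h.congr fun t => ?_
    rw [div_div, mul_comm]

theorem tendsto_rpow_nhds_zero {p : ℝ} (hp : 0 < p) :
    Tendsto (fun t : ℝ => t ^ p) (𝓝 0) (𝓝 0) := by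
  simpa [zero_rpow hp.ne'] using (continuousAt_rpow_const 0 p (Or.inr hp.le)).tendsto

theorem tendsto_one_sub_rpow_nhds_zero (p : ℝ) :
    Tendsto (fun t : ℝ => (1 - t) ^ p) (𝓝 0) (𝓝 1) := by
  simpa using ((continuousAt_const.sub continuousAt_id).rpow_const
    (p := p) (Or.inl (by norm_num : (1 : ℝ) - 0 ≠ 0))).tendsto

theorem hasDerivAt_one_sub_rpow {t : ℝ} (p : ℝ) (ht : t ≠ 1) :
    HasDerivAt (fun s => (1 - s) ^ p) (-(p * (1 - t) ^ (p - 1))) t := by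
  simpa using ((hasDerivAt_id t).const_sub 1).rpow_const (p := p)
    (Or.inl (sub_ne_zero.2 ht.symm))

namespace Renyi

noncomputable def powSum (γ t : ℝ) : ℝ := t ^ γ + (1 - t) ^ γ

noncomputable def powSumDeriv (γ t : ℝ) : ℝ := γ * t ^ (γ - 1) - γ * (1 - t) ^ (γ - 1)

noncomputable def powSumDeriv2 (γ t : ℝ) : ℝ :=
  γ * (γ - 1) * t ^ (γ - 2) + γ * (γ - 1) * (1 - t) ^ (γ - 2)

noncomputable def effRemainder (γ t : ℝ) : ℝ :=
  1 / (1 - γ) * log (powSum γ t) - γ / (γ - 1) * t - γ / (2 * (γ - 1)) * t ^ 2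

noncomputable def effRemainderDeriv (γ t : ℝ) : ℝ :=
  1 / (1 - γ) * (powSumDeriv γ t / powSum γ t) - γ / (γ - 1) - γ / (γ - 1) * t

noncomputable def effRemainderDeriv2 (γ t : ℝ) : ℝ :=
  1 / (1 - γ) * ((powSumDeriv2 γ t * powSum γ t - powSumDeriv γ t ^ 2) / powSum γ t ^ 2)
    - γ / (γ - 1)

variable {γ t : ℝ}

theorem powSum_pos (ht₀ : 0 < t) (ht₁ : t < 1) : 0 < powSum γ t :=
  add_pos (rpow_pos_of_pos ht₀ γ) (rpow_pos_of_pos (sub_pos.2 ht₁) γ)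

theorem hasDerivAt_powSum (ht₀ : t ≠ 0) (ht₁ : t ≠ 1) :
    HasDerivAt (powSum γ) (powSumDeriv γ t) t :=
  ((hasDerivAt_rpow_const (Or.inl ht₀)).add (hasDerivAt_one_sub_rpow γ ht₁)).congr_deriv <| by
    rw [powSumDeriv]; ring

theorem hasDerivAt_powSumDeriv (ht₀ : t ≠ 0) (ht₁ : t ≠ 1) :
    HasDerivAt (powSumDeriv γ) (powSumDeriv2 γ t) t :=
  (((hasDerivAt_rpow_const (Or.inl ht₀)).const_mul γ).sub
    ((hasDerivAt_one_sub_rpow (γ - 1) ht₁).const_mul γ)).congr_deriv <| by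
    rw [powSumDeriv2, sub_sub, one_add_one_eq_two]; ring

theorem hasDerivAt_effRemainder (ht₀ : 0 < t) (ht₁ : t < 1) :
    HasDerivAt (effRemainder γ) (effRemainderDeriv γ t) t := by
  have hlog := (hasDerivAt_powSum (γ := γ) ht₀.ne' ht₁.ne).log (powSum_pos ht₀ ht₁).ne'
  refine (((hlog.const_mul (1 / (1 - γ))).sub ((hasDerivAt_id t).const_mul (γ / (γ - 1)))).sub
    ((hasDerivAt_pow 2 t).const_mul (γ / (2 * (γ - 1))))).congr_deriv ?_
  rw [effRemainderDeriv, mul_comm 2 (γ - 1), ← div_div]; ring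

theorem hasDerivAt_effRemainderDeriv (ht₀ : 0 < t) (ht₁ : t < 1) :
    HasDerivAt (effRemainderDeriv γ) (effRemainderDeriv2 γ t) t := by
  have hdiv := (hasDerivAt_powSumDeriv (γ := γ) ht₀.ne' ht₁.ne).div
    (hasDerivAt_powSum ht₀.ne' ht₁.ne) (powSum_pos (γ := γ) ht₀ ht₁).ne'
  refine (((hdiv.const_mul (1 / (1 - γ))).sub (hasDerivAt_const t (γ / (γ - 1)))).sub
    ((hasDerivAt_id t).const_mul (γ / (γ - 1)))).congr_deriv ?_
  rw [effRemainderDeriv2]; ring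

theorem eqOn_deriv_effRemainder :
    EqOn (deriv (effRemainder γ)) (effRemainderDeriv γ) (Ioo 0 1) :=
  fun _ ht => (hasDerivAt_effRemainder ht.1 ht.2).deriv

theorem eqOn_iteratedDeriv_two_effRemainder :
    EqOn (iteratedDeriv 2 (effRemainder γ)) (effRemainderDeriv2 γ) (Ioo 0 1) := by
  intro t ht
  rw [iteratedDeriv_succ, iteratedDeriv_one,
    eqOn_deriv_effRemainder.deriv isOpen_Ioo ht, (hasDerivAt_effRemainderDeriv ht.1 ht.2).deriv]

theorem tendsto_powSum (hγ : 0 < γ) : Tendsto (powSum γ) (𝓝 0) (𝓝 1) := by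
  unfold powSum
  simpa using (tendsto_rpow_nhds_zero hγ).add (tendsto_one_sub_rpow_nhds_zero γ)

theorem tendsto_powSumDeriv (hγ : 1 < γ) : Tendsto (powSumDeriv γ) (𝓝 0) (𝓝 (-γ)) := by
  unfold powSumDeriv
  simpa using ((tendsto_rpow_nhds_zero (sub_pos.2 hγ)).const_mul γ).sub
    ((tendsto_one_sub_rpow_nhds_zero (γ - 1)).const_mul γ)

theorem tendsto_powSumDeriv2 (hγ : 2 < γ) :
    Tendsto (powSumDeriv2 γ) (𝓝 0) (𝓝 (γ * (γ - 1))) := by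
  unfold powSumDeriv2
  simpa using ((tendsto_rpow_nhds_zero (sub_pos.2 hγ)).const_mul (γ * (γ - 1))).add
    ((tendsto_one_sub_rpow_nhds_zero (γ - 2)).const_mul (γ * (γ - 1)))

theorem tendsto_effRemainder (hγ : 0 < γ) : Tendsto (effRemainder γ) (𝓝 0) (𝓝 0) := by
  have hlog := (continuousAt_log one_ne_zero).tendsto.comp (tendsto_powSum hγ)
  unfold effRemainder
  simpa using ((hlog.const_mul (1 / (1 - γ))).sub (tendsto_id.const_mul (γ / (γ - 1)))).sub
    ((tendsto_id.pow 2).const_mul (γ / (2 * (γ - 1))))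

theorem tendsto_effRemainderDeriv (hγ : 1 < γ) : Tendsto (effRemainderDeriv γ) (𝓝 0) (𝓝 0) := by
  have hQ := (tendsto_powSumDeriv hγ).div (tendsto_powSum (by linarith)) one_ne_zero
  have h := ((hQ.const_mul (1 / (1 - γ))).sub_const (γ / (γ - 1))).sub
    (tendsto_id.const_mul (γ / (γ - 1)))
  have hlim : 1 / (1 - γ) * (-γ / 1) - γ / (γ - 1) - γ / (γ - 1) * 0 = 0 := by
    rw [← neg_sub γ 1, one_div_neg_eq_neg_one_div]; ring
  rw [hlim] at h
  exact h

theorem tendsto_effRemainderDeriv2 (hγ : 2 < γ) :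
    Tendsto (effRemainderDeriv2 γ) (𝓝 0) (𝓝 0) := by
  have hS := tendsto_powSum (γ := γ) (by linarith)
  have hN := ((tendsto_powSumDeriv2 hγ).mul hS).sub ((tendsto_powSumDeriv (by linarith)).pow 2)
  have h := ((hN.div (hS.pow 2) (by norm_num)).const_mul (1 / (1 - γ))).sub_const (γ / (γ - 1))
  have hlim : 1 / (1 - γ) * ((γ * (γ - 1) * 1 - (-γ) ^ 2) / 1 ^ 2) - γ / (γ - 1) = 0 := by
    rw [← neg_sub γ 1, one_div_neg_eq_neg_one_div]; ring
  rw [hlim] at h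
  exact h

theorem eventually_hasDerivAt_effRemainder :
    ∀ᶠ t in 𝓝[>] 0, HasDerivAt (effRemainder γ) (effRemainderDeriv γ t) t := by
  filter_upwards [Ioo_mem_nhdsGT one_pos] with t ht using hasDerivAt_effRemainder ht.1 ht.2

theorem eventually_hasDerivAt_effRemainderDeriv :
    ∀ᶠ t in 𝓝[>] 0, HasDerivAt (effRemainderDeriv γ) (effRemainderDeriv2 γ t) t := by
  filter_upwards [Ioo_mem_nhdsGT one_pos] with t ht using hasDerivAt_effRemainderDeriv ht.1 ht.2

theorem tendsto_effRemainderDeriv_div (hγ : 2 < γ) :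
    Tendsto (fun t => effRemainderDeriv γ t / t) (𝓝[>] 0) (𝓝 0) := by
  simpa using tendsto_div_pow_succ_of_hasDerivAt 0 eventually_hasDerivAt_effRemainderDeriv
    ((tendsto_effRemainderDeriv (by linarith)).mono_left nhdsWithin_le_nhds)
    (by simpa using (tendsto_effRemainderDeriv2 hγ).mono_left nhdsWithin_le_nhds)

theorem tendsto_effRemainder_div_sq (hγ : 2 < γ) :
    Tendsto (fun t => effRemainder γ t / t ^ 2) (𝓝[>] 0) (𝓝 0) :=
  tendsto_div_pow_succ_of_hasDerivAt 1 eventually_hasDerivAt_effRemainder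
    ((tendsto_effRemainder (by linarith)).mono_left nhdsWithin_le_nhds)
    (by simpa using tendsto_effRemainderDeriv_div hγ)

theorem eqOn_effRemainder (hγ : γ ≠ 1) :
    EqOn (fun s => renyiEntropy γ s - γ / (γ - 1) * s - γ / (2 * (γ - 1)) * s ^ 2)
      (effRemainder γ) (Ioo 0 1) := by
  intro t ht
  simp only [renyiEntropy, if_pos ht, if_neg hγ, effRemainder, powSum]

end Renyi

open Renyi in
/-- For `γ > 2` and `F(t) = η_γ(t) − (γ/(γ−1))·t − (γ/(2(γ−1)))·t²`, one has
`lim_{t→0⁺} t^{k−2}·F^{(k)}(t) = 0` for `k = 0, 1, 2`. -/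
theorem renyiEntropy_eff_gt_two {γ : ℝ} (hγ : 2 < γ) (k : ℕ) (hk : k ≤ 2) :
    Filter.Tendsto
      (fun t : ℝ => t ^ ((k : ℝ) - 2)
        * iteratedDeriv k
            (fun s : ℝ =>
              renyiEntropy γ s - (γ / (γ - 1)) * s - (γ / (2 * (γ - 1))) * s ^ 2) t)
      (nhdsWithin 0 (Set.Ioi 0)) (nhds 0) := by
  have hIoo : Ioo (0 : ℝ) 1 ∈ 𝓝[>] 0 := Ioo_mem_nhdsGT one_pos
  have hF := (eqOn_effRemainder (by linarith : 1 < γ).ne').iteratedDeriv_of_isOpen isOpen_Ioo k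
  suffices Tendsto (fun t => t ^ ((k : ℝ) - 2) * iteratedDeriv k (effRemainder γ) t)
      (𝓝[>] 0) (𝓝 0) by
    refine this.congr' ?_
    filter_upwards [hIoo] with t ht
    rw [hF ht]
  interval_cases k
  · refine (tendsto_effRemainder_div_sq hγ).congr' ?_
    filter_upwards [hIoo] with t ht
    simp [rpow_neg ht.1.le, div_eq_inv_mul]
  · refine (tendsto_effRemainderDeriv_div hγ).congr' ?_
    filter_upwards [hIoo] with t ht
    norm_num [eqOn_deriv_effRemainder ht, div_eq_inv_mul, rpow_neg_one]
  · refine ((tendsto_effRemainderDeriv2 hγ).mono_left nhdsWithin_le_nhds).congr' ?_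
    filter_upwards [hIoo] with t ht
    simp [eqOn_iteratedDeriv_two_effRemainder ht]
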